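/- Let σ₀, α₀ > 0 with Δ := (ℓ-1)(C ℓ(ℓ+1) - 1/4) > 0 where C = σ₀/α₀², and define f(ℓ) := (α₀/(2ℓ))² + (4σ₀(ℓ²-1) - α₀²)/(4ℓ) and g₊(ℓ) := -α₀/(2ℓ) + √(f(ℓ)), g₋(ℓ) := -α₀/(2ℓ) - √(f(ℓ)) for real ℓ > 0 where f(ℓ) > 0. Then there exists ℓ₀ such that for all ℓ ≥ ℓ₀, g₊'(ℓ) > 0 and g₋'(ℓ) < 0. -/

import Mathlib

set_option maxHeartbeats 1000000

theorem resonant_frequencies_eventually_monotone (σ₀ α₀ : ℝ) (hσ : 0 < σ₀) (hα : 0 < α₀) :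
    ∃ ℓ₀ : ℝ, ∀ ℓ : ℝ, ℓ₀ ≤ ℓ →
      0 < deriv (fun t : ℝ =>
            -α₀ / (2 * t) + Real.sqrt ((α₀ / (2 * t)) ^ 2 + (4 * σ₀ * (t ^ 2 - 1) - α₀ ^ 2) / (4 * t))) ℓ
      ∧ deriv (fun t : ℝ =>
            -α₀ / (2 * t) - Real.sqrt ((α₀ / (2 * t)) ^ 2 + (4 * σ₀ * (t ^ 2 - 1) - α₀ ^ 2) / (4 * t))) ℓ
          < 0 := by
  refine ⟨2 + α₀ / σ₀ + (σ₀ + α₀ ^ 2 / 4) + 2 * (σ₀ + α₀ ^ 2 / 4) / σ₀, fun ℓ hℓ => ?_⟩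
  have hq1 : 0 < α₀ / σ₀ := div_pos hα hσ
  have hq2 : 0 < σ₀ + α₀ ^ 2 / 4 := by positivity
  have hq3 : 0 < 2 * (σ₀ + α₀ ^ 2 / 4) / σ₀ := by positivity
  have h2 : (2 : ℝ) ≤ ℓ := by linarith
  have hpos : (0 : ℝ) < ℓ := by linarith
  have hKℓ : 2 * (σ₀ + α₀ ^ 2 / 4) ≤ σ₀ * ℓ := by
    have : 2 * (σ₀ + α₀ ^ 2 / 4) / σ₀ ≤ ℓ := by linarith
    calc 2 * (σ₀ + α₀ ^ 2 / 4) = σ₀ * (2 * (σ₀ + α₀ ^ 2 / 4) / σ₀) := by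
          field_simp
      _ ≤ σ₀ * ℓ := by nlinarith
  have hαℓ : α₀ < σ₀ * ℓ := by
    have : α₀ / σ₀ ≤ ℓ - 2 := by linarith
    nlinarith [mul_le_mul_of_nonneg_left this hσ.le, mul_div_cancel₀ α₀ hσ.ne']
  set fℓ : ℝ := (α₀ / (2 * ℓ)) ^ 2 + (4 * σ₀ * (ℓ ^ 2 - 1) - α₀ ^ 2) / (4 * ℓ) with hfl
  have hfeq : fℓ = α₀ ^ 2 / (4 * ℓ ^ 2) + σ₀ * ℓ - σ₀ / ℓ - α₀ ^ 2 / (4 * ℓ) := by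
    rw [hfl]; field_simp; ring
  clear_value fℓ
  have hlow : σ₀ * ℓ / 2 ≤ fℓ := by
    rw [hfeq]
    have h1 : σ₀ / ℓ ≤ σ₀ := by
      rw [div_le_iff₀ hpos]; nlinarith
    have h2' : α₀ ^ 2 / (4 * ℓ) ≤ α₀ ^ 2 / 4 := by
      apply div_le_div_of_nonneg_left (by positivity) (by norm_num) (by linarith)
    have h3 : 0 ≤ α₀ ^ 2 / (4 * ℓ ^ 2) := by positivity
    linarith
  have hfpos : 0 < fℓ := lt_of_lt_of_le (by positivity) hlow
  have hup : fℓ ≤ ℓ ^ 2 := by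
    rw [hfeq]
    have h1 : α₀ ^ 2 / (4 * ℓ ^ 2) ≤ α₀ ^ 2 / 4 := by
      apply div_le_div_of_nonneg_left (by positivity) (by norm_num) (by nlinarith)
    have h2' : 0 ≤ σ₀ / ℓ := by positivity
    have h3 : 0 ≤ α₀ ^ 2 / (4 * ℓ) := by positivity
    have hK : σ₀ + α₀ ^ 2 / 4 ≤ ℓ := by linarith
    nlinarith
  have hsq : Real.sqrt fℓ ≤ ℓ := by
    calc Real.sqrt fℓ ≤ Real.sqrt (ℓ ^ 2) := Real.sqrt_le_sqrt hup
      _ = ℓ := by rw [Real.sqrt_sq hpos.le]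
  have hsqpos : 0 < Real.sqrt fℓ := Real.sqrt_pos.2 hfpos
  -- derivative of -α₀/(2t)
  have hd1 : HasDerivAt (fun t : ℝ => -α₀ / (2 * t)) (α₀ / (2 * ℓ ^ 2)) ℓ := by
    have h := (hasDerivAt_const ℓ (-α₀)).div ((hasDerivAt_id ℓ).const_mul 2)
      (by positivity : (2 : ℝ) * ℓ ≠ 0)
    refine h.congr_deriv ?_
    simp only [id]
    field_simp
    ring
  -- derivative of f
  set E : ℝ := σ₀ + σ₀ / ℓ ^ 2 + α₀ ^ 2 / (4 * ℓ ^ 2) - α₀ ^ 2 / (2 * ℓ ^ 3) with hE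
  have hdf : HasDerivAt
      (fun t : ℝ => (α₀ / (2 * t)) ^ 2 + (4 * σ₀ * (t ^ 2 - 1) - α₀ ^ 2) / (4 * t)) E ℓ := by
    have h1 : HasDerivAt (fun t : ℝ => α₀ / (2 * t))
        ((0 * (2 * ℓ) - α₀ * (2 * 1)) / (2 * ℓ) ^ 2) ℓ :=
      (hasDerivAt_const ℓ α₀).div ((hasDerivAt_id ℓ).const_mul 2) (by positivity)
    have h1sq := h1.pow 2
    have hnum : HasDerivAt (fun t : ℝ => 4 * σ₀ * (t ^ 2 - 1) - α₀ ^ 2)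
        (4 * σ₀ * (2 * ℓ ^ 1)) ℓ :=
      (((hasDerivAt_pow 2 ℓ).sub_const 1).const_mul (4 * σ₀)).sub_const (α₀ ^ 2)
    have hden : HasDerivAt (fun t : ℝ => 4 * t) (4 * 1) ℓ := (hasDerivAt_id ℓ).const_mul 4
    have h2' := hnum.div hden (by positivity : (4 : ℝ) * ℓ ≠ 0)
    have h := h1sq.add h2'
    refine h.congr_deriv ?_
    rw [hE]
    norm_num
    field_simp
    ring
  have hEσ : σ₀ ≤ E := by
    rw [hE]
    have h1 : 0 ≤ σ₀ / ℓ ^ 2 := by positivity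
    have h2' : α₀ ^ 2 / (2 * ℓ ^ 3) ≤ α₀ ^ 2 / (4 * ℓ ^ 2) := by
      apply div_le_div_of_nonneg_left (by positivity) (by positivity)
      nlinarith
    linarith
  clear_value E
  have hfpos' : (α₀ / (2 * ℓ)) ^ 2 + (4 * σ₀ * (ℓ ^ 2 - 1) - α₀ ^ 2) / (4 * ℓ) ≠ 0 := by
    rw [← hfl]; exact hfpos.ne'
  have hdsqrt := hdf.sqrt hfpos'
  -- combine
  have hgp : deriv (fun t : ℝ =>
            -α₀ / (2 * t) + Real.sqrt ((α₀ / (2 * t)) ^ 2 + (4 * σ₀ * (t ^ 2 - 1) - α₀ ^ 2) / (4 * t))) ℓ = _ := (hd1.add hdsqrt).deriv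
  have hgm : deriv (fun t : ℝ =>
            -α₀ / (2 * t) - Real.sqrt ((α₀ / (2 * t)) ^ 2 + (4 * σ₀ * (t ^ 2 - 1) - α₀ ^ 2) / (4 * t))) ℓ = _ := (hd1.sub hdsqrt).deriv
  have key : α₀ / (2 * ℓ ^ 2) < E / (2 * Real.sqrt fℓ) := by
    rw [div_lt_div_iff₀ (by positivity) (by positivity)]
    have h1 : α₀ * Real.sqrt fℓ ≤ α₀ * ℓ := mul_le_mul_of_nonneg_left hsq hα.le
    have h2'' : α₀ * ℓ < σ₀ * ℓ * ℓ := mul_lt_mul_of_pos_right hαℓ hpos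
    have h3 : σ₀ * ℓ ^ 2 ≤ E * ℓ ^ 2 := mul_le_mul_of_nonneg_right hEσ (sq_nonneg ℓ)
    calc α₀ * (2 * Real.sqrt fℓ) = 2 * (α₀ * Real.sqrt fℓ) := by ring
      _ ≤ 2 * (α₀ * ℓ) := by linarith
      _ < 2 * (σ₀ * ℓ * ℓ) := by linarith
      _ = 2 * (σ₀ * ℓ ^ 2) := by ring
      _ ≤ 2 * (E * ℓ ^ 2) := by linarith
      _ = E * (2 * ℓ ^ 2) := by ring
  constructor
  · rw [hgp, ← hfl]
    have : 0 < E / (2 * Real.sqrt fℓ) := by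
      apply div_pos (by linarith) (by positivity)
    linarith [div_pos hα (by positivity : (0:ℝ) < 2 * ℓ ^ 2)]
  · rw [hgm, ← hfl]
    linarith
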